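/- arXiv:2107.00384 — 5 statements merged into one kernel-verified Lean document; each statement's English description precedes it below -/
import Mathlib

section
/- Let D ∈ ℝ^{m×m} be an injective linear map, let M : ℝ^m → ℝ^p be continuous, B ∈ ℝ^p, γ > 0, 0 < q ≤ 2. Then the functional J(x) = (1/2)‖M(x) − B‖₂² + (γ/q)‖Dx‖_q^q is coercive, i.e., J(x_j) → ∞ whenever ‖x_j‖₂ → ∞. -/
open Finset Filter

theorem stmt3 (m p : ℕ) (D : Matrix (Fin m) (Fin m) ℝ)
    (hD : Function.Injective D.mulVec)
    (M : (Fin m → ℝ) → (Fin p → ℝ)) (hM : Continuous M)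
    (B : Fin p → ℝ) (γ q : ℝ) (hγ : 0 < γ) (hq0 : 0 < q) (hq2 : q ≤ 2)
    (x : ℕ → Fin m → ℝ)
    (hx : Tendsto (fun j => Real.sqrt (∑ i, (x j i) ^ 2)) atTop atTop) :
    Tendsto (fun j =>
        (1 / 2) * ∑ i, (M (x j) i - B i) ^ 2 +
          (γ / q) * ∑ i, |D.mulVec (x j) i| ^ q)
      atTop atTop := by
  -- dispose of the degenerate case m = 0
  rcases Nat.eq_zero_or_pos m with hm | hm
  · exfalso
    subst hm
    have h0 : ∀ j, Real.sqrt (∑ i : Fin 0, (x j i) ^ 2) = 0 := by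
      intro j; simp
    have := (hx.eventually_gt_atTop 0).exists
    obtain ⟨j, hj⟩ := this
    rw [h0 j] at hj
    exact lt_irrefl 0 hj
  haveI : Nonempty (Fin m) := Fin.pos_iff_nonempty.mp hm
  haveI : Nontrivial (Fin m → ℝ) := inferInstance
  set f : (Fin m → ℝ) → ℝ := fun v => ∑ i, |D.mulVec v i| ^ q with hfdef
  -- continuity of f
  have hDc : Continuous fun v : Fin m → ℝ => D.mulVec v := by
    have : (fun v : Fin m → ℝ => D.mulVec v) = D.mulVecLin := by
      ext v i; simp [Matrix.mulVecLin]
    rw [this]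
    exact D.mulVecLin.continuous_of_finiteDimensional
  have hfc : Continuous f := by
    apply continuous_finset_sum
    intro i _
    have h1 : Continuous fun v : Fin m → ℝ => |D.mulVec v i| :=
      ((continuous_apply i).comp hDc).abs
    exact h1.rpow_const (fun v => Or.inr hq0.le)
  -- positivity of f off zero
  have hfpos : ∀ v : Fin m → ℝ, v ≠ 0 → 0 < f v := by
    intro v hv
    have hDv : D.mulVec v ≠ 0 := by
      intro h
      apply hv
      apply hD
      rw [h, Matrix.mulVec_zero]
    obtain ⟨i, hi⟩ := Function.ne_iff.mp hDv
    apply Finset.sum_pos' (fun i _ => Real.rpow_nonneg (abs_nonneg _) q)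
    exact ⟨i, Finset.mem_univ i, Real.rpow_pos_of_pos (abs_pos.mpr hi) q⟩
  -- homogeneity
  have hhom : ∀ (t : ℝ) (v : Fin m → ℝ), f (t • v) = |t| ^ q * f v := by
    intro t v
    simp only [hfdef]
    rw [Finset.mul_sum]
    apply Finset.sum_congr rfl
    intro i _
    rw [Matrix.mulVec_smul]
    simp only [Pi.smul_apply, smul_eq_mul, abs_mul]
    rw [Real.mul_rpow (abs_nonneg _) (abs_nonneg _)]
  -- minimum on the sphere
  obtain ⟨v₀, hv₀, hmin⟩ := (isCompact_sphere (0 : Fin m → ℝ) 1).exists_isMinOn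
    (NormedSpace.sphere_nonempty.mpr zero_le_one) hfc.continuousOn
  have hv₀norm : ‖v₀‖ = 1 := by simpa using mem_sphere_zero_iff_norm.mp hv₀
  set c := f v₀ with hcdef
  have hc : 0 < c := hfpos v₀ (by intro h; rw [h] at hv₀norm; simp at hv₀norm)
  -- key lower bound
  have key : ∀ v : Fin m → ℝ, c * ‖v‖ ^ q ≤ f v := by
    intro v
    rcases eq_or_ne v 0 with rfl | hv
    · simp [hfdef, Real.zero_rpow hq0.ne', norm_zero]
    · have ht : (0 : ℝ) < ‖v‖ := norm_pos_iff.mpr hv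
      set u : Fin m → ℝ := ‖v‖⁻¹ • v with hudef
      have hu1 : ‖u‖ = 1 := by
        rw [hudef, norm_smul, norm_inv, norm_norm, inv_mul_cancel₀ ht.ne']
      have hvu : v = ‖v‖ • u := by
        rw [hudef, smul_smul, mul_inv_cancel₀ ht.ne', one_smul]
      have hfv : f v = ‖v‖ ^ q * f u := by
        conv_lhs => rw [hvu]
        rw [hhom, abs_of_pos ht]
      calc c * ‖v‖ ^ q ≤ f u * ‖v‖ ^ q := by
            apply mul_le_mul_of_nonneg_right _ (Real.rpow_nonneg ht.le q)
            exact hmin (mem_sphere_zero_iff_norm.mpr hu1)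
        _ = f v := by rw [hfv, mul_comm]
  -- ‖x j‖ (sup norm) tends to atTop
  have hnorm : Tendsto (fun j => ‖x j‖) atTop atTop := by
    have hsqrtm : (0 : ℝ) < Real.sqrt m := Real.sqrt_pos.mpr (by exact_mod_cast hm)
    apply tendsto_atTop_mono _ (hx.atTop_div_const hsqrtm)
    intro j
    rw [div_le_iff₀ hsqrtm]
    have h1 : ∑ i, (x j i) ^ 2 ≤ (Real.sqrt m * ‖x j‖) ^ 2 := by
      have h2 : ∀ i, (x j i) ^ 2 ≤ ‖x j‖ ^ 2 := by
        intro i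
        have := norm_le_pi_norm (x j) i
        calc (x j i) ^ 2 = |x j i| ^ 2 := (sq_abs _).symm
          _ ≤ ‖x j‖ ^ 2 := by
              apply pow_le_pow_left₀ (abs_nonneg _) this
      calc ∑ i, (x j i) ^ 2 ≤ ∑ _i : Fin m, ‖x j‖ ^ 2 := Finset.sum_le_sum (fun i _ => h2 i)
        _ = m * ‖x j‖ ^ 2 := by rw [Finset.sum_const]; simp [mul_comm]
        _ = (Real.sqrt m * ‖x j‖) ^ 2 := by
            rw [mul_pow, Real.sq_sqrt (by positivity : (0:ℝ) ≤ (m:ℝ))]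
    calc Real.sqrt (∑ i, (x j i) ^ 2) ≤ Real.sqrt ((Real.sqrt m * ‖x j‖) ^ 2) :=
          Real.sqrt_le_sqrt h1
      _ = Real.sqrt m * ‖x j‖ := Real.sqrt_sq (by positivity)
      _ = ‖x j‖ * Real.sqrt m := mul_comm _ _
  -- assemble
  have hpow : Tendsto (fun j => ‖x j‖ ^ q) atTop atTop :=
    (tendsto_rpow_atTop hq0).comp hnorm
  have hg : Tendsto (fun j => (γ / q) * (c * ‖x j‖ ^ q)) atTop atTop :=
    (hpow.const_mul_atTop hc).const_mul_atTop (div_pos hγ hq0)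
  apply tendsto_atTop_mono _ hg
  intro j
  have h1 : (0:ℝ) ≤ (1 / 2) * ∑ i, (M (x j) i - B i) ^ 2 := by positivity
  have h2 : (γ / q) * (c * ‖x j‖ ^ q) ≤ (γ / q) * ∑ i, |D.mulVec (x j) i| ^ q :=
    mul_le_mul_of_nonneg_left (key (x j)) (div_pos hγ hq0).le
  linarith
end

section
/- Let M : ℝ^m → ℝ^p be continuous, D ∈ ℝ^{m×m} injective, B ∈ ℝ^p, γ > 0, 0 < q ≤ 2. Then the functional J(x) = (1/2)‖M(x) − B‖₂² + (γ/q)‖Dx‖_q^q + ι₀(x), where ι₀ is the indicator function of the non-negative cone (0 if all coordinates of x are ≥ 0, +∞ otherwise), admits a global minimizer on ℝ^m. -/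
open Finset Filter Set

theorem stmt4 (m p : ℕ) (M : (Fin m → ℝ) → (Fin p → ℝ)) (hM : Continuous M)
    (D : Matrix (Fin m) (Fin m) ℝ) (hD : Function.Injective D.mulVec)
    (B : Fin p → ℝ) (γ q : ℝ) (hγ : 0 < γ) (hq0 : 0 < q) (hq2 : q ≤ 2) :
    ∃ xstar : Fin m → ℝ, ∀ x : Fin m → ℝ,
      (if ∀ i, 0 ≤ xstar i then
        (((1 / 2) * ∑ i, (M xstar i - B i) ^ 2 +
            (γ / q) * ∑ i, |D.mulVec xstar i| ^ q : ℝ) : EReal)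
       else ⊤) ≤
      (if ∀ i, 0 ≤ x i then
        (((1 / 2) * ∑ i, (M x i - B i) ^ 2 +
            (γ / q) * ∑ i, |D.mulVec x i| ^ q : ℝ) : EReal)
       else ⊤) := by
  rcases Nat.eq_zero_or_pos m with hm | hm
  · -- trivial case: the space is a singleton
    subst hm
    refine ⟨0, fun x => ?_⟩
    have hx : x = 0 := funext fun i => i.elim0
    subst hx
    exact le_refl _
  have : Nonempty (Fin m) := ⟨⟨0, hm⟩⟩
  -- the real-valued objective
  set f : (Fin m → ℝ) → ℝ := fun x =>
    (1 / 2) * ∑ i, (M x i - B i) ^ 2 + (γ / q) * ∑ i, |D.mulVec x i| ^ q with hf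
  -- continuity of f
  have hcont : Continuous f := by
    apply Continuous.add
    · apply continuous_const.mul
      apply continuous_finset_sum
      intro i _
      exact (((continuous_apply i).comp hM).sub continuous_const).pow 2
    · apply continuous_const.mul
      apply continuous_finset_sum
      intro i _
      have h1 : Continuous fun x : Fin m → ℝ => |D.mulVec x i| := by
        have := (Matrix.mulVecLin D).continuous_of_finiteDimensional
        exact ((continuous_apply i).comp this).abs
      exact (Real.continuous_rpow_const hq0.le).comp h1
  -- coercivity
  obtain ⟨K, hK0, hKanti⟩ :=
    (Matrix.mulVecLin D).exists_antilipschitzWith (by rw [LinearMap.ker_eq_bot]; simpa [Function.Injective, Matrix.mulVecLin_apply] using hD)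
  have hnormD : ∀ x : Fin m → ℝ, ‖x‖ / K ≤ ‖D.mulVec x‖ := by
    intro x
    have := hKanti.le_mul_dist x 0
    simp only [dist_zero_right, map_zero, dist_eq_norm, sub_zero,
      Matrix.mulVecLin_apply] at this
    rw [div_le_iff₀ (by exact_mod_cast hK0)]
    linarith [this]
  have hDlim : Tendsto (fun x : Fin m → ℝ => ‖D.mulVec x‖) (cocompact _) atTop := by
    apply tendsto_atTop_mono hnormD
    exact (tendsto_norm_cocompact_atTop).atTop_div_const (by exact_mod_cast hK0)
  have hsumge : ∀ y : Fin m → ℝ, ‖y‖ ^ q ≤ ∑ i, |y i| ^ q := by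
    intro y
    obtain ⟨j, -, hj⟩ := Finset.exists_mem_eq_sup (univ : Finset (Fin m)) univ_nonempty
      (fun i => ‖y i‖₊)
    have hnorm : ‖y‖ = |y j| := by
      rw [Pi.norm_def, hj]; simp [Real.norm_eq_abs]
    rw [hnorm]
    exact Finset.single_le_sum (fun i _ => Real.rpow_nonneg (abs_nonneg _) q) (mem_univ j)
  have hpen : Tendsto (fun x : Fin m → ℝ => ∑ i, |D.mulVec x i| ^ q) (cocompact _) atTop := by
    apply tendsto_atTop_mono (fun x => hsumge (D.mulVec x))
    exact (tendsto_rpow_atTop hq0).comp hDlim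
  have hflim : Tendsto f (cocompact _) atTop := by
    apply tendsto_atTop_mono (fun x => ?_)
      (hpen.const_mul_atTop (div_pos hγ hq0))
    have h1 : (0:ℝ) ≤ (1 / 2) * ∑ i, (M x i - B i) ^ 2 := by
      positivity
    simp only [hf]; linarith
  -- minimize on the nonnegative cone
  set s : Set (Fin m → ℝ) := {x | ∀ i, 0 ≤ x i} with hs
  have hsclosed : IsClosed s := by
    have : s = ⋂ i, {x : Fin m → ℝ | 0 ≤ x i} := by
      ext x; simp [hs]
    rw [this]
    exact isClosed_iInter fun i => isClosed_le continuous_const (continuous_apply i)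
  have h0s : (0 : Fin m → ℝ) ∈ s := fun i => le_refl 0
  obtain ⟨xstar, hxs, hxmin⟩ := hcont.continuousOn.exists_isMinOn' hsclosed h0s
    ((hflim.eventually (eventually_ge_atTop (f 0))).filter_mono inf_le_left)
  refine ⟨xstar, fun x => ?_⟩
  have hxs' : ∀ i, 0 ≤ xstar i := hxs
  rw [if_pos hxs']
  by_cases hx : ∀ i, 0 ≤ x i
  · rw [if_pos hx]
    exact_mod_cast hxmin hx
  · rw [if_neg hx]
    exact le_top
end

section
/- Let M : ℝ^m → ℝ^p be continuous, D ∈ ℝ^{m×m} injective, 0 < q ≤ 2 fixed, B ∈ ℝ^p. Let B_j ∈ ℝ^p and δ_j > 0 satisfy ‖B − B_j‖₂ ≤ δ_j with δ_j → 0, and let γ_j > 0 satisfy γ_j → 0 and δ_j²/γ_j → 0. Suppose the set S = {x ≥ 0 : M(x) = B} is nonempty, and for each j let x_j be a global minimizer of J_j(x) = (1/2)‖M(x) − B_j‖₂² + (γ_j/q)‖Dx‖_q^q over the nonnegative cone. Then {x_j} has a convergent subsequence, and every limit point x* of {x_j} satisfies x* ≥ 0, M(x*) = B, and ‖Dx*‖_q^q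 = min{‖Dx‖_q^q : x ≥ 0, M(x) = B}. -/
/-!
Comparing the minimizer `x j` of `J_j` with a feasible `y` (`y ≥ 0`, `M y = B`) gives
`‖M (x j) - B_j‖² ≤ δ_j² + (2 γ_j / q) ‖D y‖_q^q` and `‖D (x j)‖_q^q ≤ ‖D y‖_q^q + q δ_j² / (2 γ_j)`.
The first bound forces `M (x j) → B`. The second bounds `‖D (x j)‖_q^q`, hence `x j` because `D` is
injective, so Bolzano–Weierstrass gives a convergent subsequence; along any such subsequence it
passes to the limit as `‖D x*‖_q^q ≤ ‖D y‖_q^q` by lower semicontinuity of the regularizer.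
-/

open Finset Filter Topology

/-- The paper's `J_j` is `tikhonovFunctional (WithLp.toLp 2 ∘ M) (‖D ·‖_q^q) B_j (γ_j / q)`. -/
noncomputable def tikhonovFunctional {X Y : Type*} [PseudoMetricSpace Y] (M : X → Y) (R : X → ℝ)
    (b : Y) (c : ℝ) (x : X) : ℝ :=
  1 / 2 * dist (M x) b ^ 2 + c * R x

section Tikhonov

variable {X Y : Type*} [MetricSpace Y] {M : X → Y} {R : X → ℝ} {C : Set X}

section Single

variable {b b' : Y} {δ c : ℝ} {x y : X}

theorem tikhonovFunctional_le_of_isMinOn (hmin : IsMinOn (tikhonovFunctional M R b' c) C x)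
    (hb : dist b b' ≤ δ) (hy : y ∈ C) (hMy : M y = b) :
    tikhonovFunctional M R b' c x ≤ δ ^ 2 / 2 + c * R y := by
  have hsq : dist b b' ^ 2 ≤ δ ^ 2 := pow_le_pow_left₀ dist_nonneg hb 2
  have h := isMinOn_iff.mp hmin y hy
  simp only [tikhonovFunctional, hMy] at h ⊢
  linarith

theorem regularizer_le_of_isMinOn (hmin : IsMinOn (tikhonovFunctional M R b' c) C x)
    (hc : 0 < c) (hb : dist b b' ≤ δ) (hy : y ∈ C) (hMy : M y = b) :
    R x ≤ R y + δ ^ 2 / (2 * c) := by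
  have h := tikhonovFunctional_le_of_isMinOn hmin hb hy hMy
  have hmisfit : 0 ≤ 1 / 2 * dist (M x) b' ^ 2 := by positivity
  have hcancel : c * (δ ^ 2 / (2 * c)) = δ ^ 2 / 2 := by field_simp
  rw [tikhonovFunctional] at h
  rw [← mul_le_mul_iff_right₀ hc, mul_add, hcancel]
  linarith

theorem dist_sq_le_of_isMinOn (hmin : IsMinOn (tikhonovFunctional M R b' c) C x)
    (hc : 0 ≤ c) (hR : 0 ≤ R x) (hb : dist b b' ≤ δ) (hy : y ∈ C) (hMy : M y = b) :
    dist (M x) b' ^ 2 ≤ δ ^ 2 + 2 * c * R y := by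
  have h := tikhonovFunctional_le_of_isMinOn hmin hb hy hMy
  have hreg : 0 ≤ c * R x := mul_nonneg hc hR
  rw [tikhonovFunctional] at h
  linarith

end Single

variable {b : Y} {bj : ℕ → Y} {δ c : ℕ → ℝ} {x : ℕ → X}

theorem tendsto_const_add_sq_div_two_mul (hδc : Tendsto (fun j => δ j ^ 2 / c j) atTop (𝓝 0))
    (r : ℝ) : Tendsto (fun j => r + δ j ^ 2 / (2 * c j)) atTop (𝓝 r) := by
  have h := (hδc.div_const 2).const_add r
  simp only [div_div, zero_div, add_zero] at h
  simpa only [mul_comm] using h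

theorem tendsto_forward_of_isMinOn
    (hmin : ∀ j, IsMinOn (tikhonovFunctional M R (bj j) (c j)) C (x j))
    (hc : ∀ j, 0 ≤ c j) (hR : ∀ z, 0 ≤ R z) (hb : ∀ j, dist b (bj j) ≤ δ j)
    (hδ : Tendsto δ atTop (𝓝 0)) (hc0 : Tendsto c atTop (𝓝 0)) (hS : (C ∩ M ⁻¹' {b}).Nonempty) :
    Tendsto (fun j => M (x j)) atTop (𝓝 b) := by
  obtain ⟨y, hy, hMy⟩ := hS
  have hbound : ∀ j, dist (M (x j)) b ≤ √(δ j ^ 2 + 2 * c j * R y) + δ j := fun j =>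
    calc dist (M (x j)) b ≤ dist (M (x j)) (bj j) + dist b (bj j) := dist_triangle_right _ _ _
      _ ≤ √(δ j ^ 2 + 2 * c j * R y) + δ j := by
        gcongr
        · exact Real.le_sqrt_of_sq_le
            (dist_sq_le_of_isMinOn (hmin j) (hc j) (hR _) (hb j) hy hMy)
        · exact hb j
  have hlim : Tendsto (fun j => √(δ j ^ 2 + 2 * c j * R y) + δ j) atTop (𝓝 0) := by
    simpa using (((hδ.pow 2).add ((hc0.const_mul 2).mul_const (R y))).sqrt).add hδ
  exact tendsto_iff_dist_tendsto_zero.mpr (squeeze_zero (fun _ => dist_nonneg) hbound hlim)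

theorem exists_tendsto_subseq_of_isMinOn [PseudoMetricSpace X] [ProperSpace X]
    (hR : ∀ r, Bornology.IsBounded {z | R z ≤ r})
    (hmin : ∀ j, IsMinOn (tikhonovFunctional M R (bj j) (c j)) C (x j))
    (hc : ∀ j, 0 < c j) (hb : ∀ j, dist b (bj j) ≤ δ j)
    (hδc : Tendsto (fun j => δ j ^ 2 / c j) atTop (𝓝 0)) (hS : (C ∩ M ⁻¹' {b}).Nonempty) :
    ∃ (φ : ℕ → ℕ) (xs : X), StrictMono φ ∧ Tendsto (fun k => x (φ k)) atTop (𝓝 xs) := by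
  obtain ⟨y, hy, hMy⟩ := hS
  obtain ⟨r, hr⟩ := (tendsto_const_add_sq_div_two_mul hδc (R y)).bddAbove_range
  have hxr : ∀ j, x j ∈ {z | R z ≤ r} := fun j =>
    (regularizer_le_of_isMinOn (hmin j) (hc j) (hb j) hy hMy).trans (hr ⟨j, rfl⟩)
  obtain ⟨xs, -, φ, hφ, hconv⟩ := tendsto_subseq_of_bounded (hR r) hxr
  exact ⟨φ, xs, hφ, hconv⟩

theorem mem_and_isMinOn_of_tendsto_subseq [TopologicalSpace X] (hC : IsClosed C)
    (hM : Continuous M) (hRlsc : LowerSemicontinuous R) (hR : ∀ z, 0 ≤ R z)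
    (hmin : ∀ j, IsMinOn (tikhonovFunctional M R (bj j) (c j)) C (x j)) (hx : ∀ j, x j ∈ C)
    (hc : ∀ j, 0 < c j) (hb : ∀ j, dist b (bj j) ≤ δ j) (hδ : Tendsto δ atTop (𝓝 0))
    (hc0 : Tendsto c atTop (𝓝 0)) (hδc : Tendsto (fun j => δ j ^ 2 / c j) atTop (𝓝 0))
    (hS : (C ∩ M ⁻¹' {b}).Nonempty) {φ : ℕ → ℕ} (hφ : StrictMono φ) {xs : X}
    (hconv : Tendsto (fun k => x (φ k)) atTop (𝓝 xs)) :
    xs ∈ C ∩ M ⁻¹' {b} ∧ IsMinOn R (C ∩ M ⁻¹' {b}) xs := by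
  have hφ' := hφ.tendsto_atTop
  refine ⟨⟨hC.mem_of_tendsto hconv (Eventually.of_forall fun k => hx (φ k)), ?_⟩, ?_⟩
  · exact tendsto_nhds_unique ((hM.tendsto xs).comp hconv)
      ((tendsto_forward_of_isMinOn hmin (fun j => (hc j).le) hR hb hδ hc0 hS).comp hφ')
  · refine isMinOn_iff.mpr fun y ⟨hy, hMy⟩ => ?_
    by_contra! hlt
    obtain ⟨t, hyt, htx⟩ := exists_between hlt
    have habove : ∀ᶠ k in atTop, t < R (x (φ k)) := hconv.eventually (hRlsc xs t htx)
    have hbelow : ∀ᶠ k in atTop, R (x (φ k)) < t := by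
      filter_upwards [((tendsto_const_add_sq_div_two_mul hδc (R y)).comp hφ').eventually
        (gt_mem_nhds hyt)] with k hk
      exact (regularizer_le_of_isMinOn (hmin (φ k)) (hc _) (hb _) hy hMy).trans_lt hk
    obtain ⟨k, hk₁, hk₂⟩ := (habove.and hbelow).exists
    exact lt_asymm hk₁ hk₂

end Tikhonov

theorem EuclideanSpace.dist_toLp_sq {ι : Type*} [Fintype ι] (u v : ι → ℝ) :
    dist (WithLp.toLp 2 u) (WithLp.toLp 2 v) ^ 2 = ∑ i, (u i - v i) ^ 2 := by
  rw [EuclideanSpace.dist_eq, Real.sq_sqrt (by positivity)]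
  simp only [Real.dist_eq, sq_abs]

section SumAbsRpow

variable {ι : Type*} [Fintype ι] {q : ℝ}

theorem continuous_sum_abs_rpow (hq : 0 ≤ q) : Continuous fun v : ι → ℝ => ∑ i, |v i| ^ q :=
  continuous_finsetSum _ fun i _ =>
    (continuous_abs.comp (continuous_apply i)).rpow_const fun _ => Or.inr hq

theorem isBounded_setOf_sum_abs_rpow_le (hq : 0 < q) (r : ℝ) :
    Bornology.IsBounded {v : ι → ℝ | ∑ i, |v i| ^ q ≤ r} := by
  refine (Metric.isBounded_closedBall (x := 0) (r := r ^ q⁻¹)).subset fun v hv => ?_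
  have hterm_nonneg : ∀ i, 0 ≤ |v i| ^ q := fun i => Real.rpow_nonneg (abs_nonneg _) q
  have hterm : ∀ i, |v i| ^ q ≤ r := fun i =>
    (single_le_sum (fun j _ => hterm_nonneg j) (mem_univ i)).trans hv
  have hr : 0 ≤ r := (sum_nonneg fun j _ => hterm_nonneg j).trans hv
  rw [mem_closedBall_zero_iff, pi_norm_le_iff_of_nonneg (by positivity)]
  exact fun i => (Real.le_rpow_inv_iff_of_pos (abs_nonneg _) hr hq).mpr (hterm i)

end SumAbsRpow

theorem Matrix.isBounded_preimage_mulVec {m n : Type*} [Fintype m] [Fintype n]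
    {D : Matrix m n ℝ} (hD : Function.Injective D.mulVec) {s : Set (m → ℝ)}
    (hs : Bornology.IsBounded s) : Bornology.IsBounded (D.mulVec ⁻¹' s) := by
  obtain ⟨K, -, hK⟩ := (LinearMap.injective_iff_antilipschitz D.mulVecLin).mp hD
  exact hK.isBounded_preimage hs

theorem stmt5_general (m p : ℕ) (M : (Fin m → ℝ) → (Fin p → ℝ)) (hM : Continuous M)
    (D : Matrix (Fin m) (Fin m) ℝ) (hD : Function.Injective D.mulVec)
    (q : ℝ) (hq0 : 0 < q)
    (B : Fin p → ℝ) (Bj : ℕ → Fin p → ℝ) (δ γ : ℕ → ℝ)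
    (hγpos : ∀ j, 0 < γ j)
    (hBj : ∀ j, Real.sqrt (∑ i, (B i - Bj j i) ^ 2) ≤ δ j)
    (hδ : Tendsto δ atTop (nhds 0))
    (hγ : Tendsto γ atTop (nhds 0))
    (hδγ : Tendsto (fun j => (δ j) ^ 2 / γ j) atTop (nhds 0))
    (hS : ∃ x : Fin m → ℝ, (∀ i, 0 ≤ x i) ∧ M x = B)
    (x : ℕ → Fin m → ℝ)
    (hxpos : ∀ j i, 0 ≤ x j i)
    (hxmin : ∀ j, ∀ y : Fin m → ℝ, (∀ i, 0 ≤ y i) →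
      (1 / 2) * ∑ i, (M (x j) i - Bj j i) ^ 2 +
          (γ j / q) * ∑ i, |D.mulVec (x j) i| ^ q ≤
        (1 / 2) * ∑ i, (M y i - Bj j i) ^ 2 +
          (γ j / q) * ∑ i, |D.mulVec y i| ^ q) :
    (∃ (φ : ℕ → ℕ) (xstar : Fin m → ℝ), StrictMono φ ∧
        Tendsto (fun k => x (φ k)) atTop (nhds xstar)) ∧
    ∀ xstar : Fin m → ℝ,
      (∃ φ : ℕ → ℕ, StrictMono φ ∧
        Tendsto (fun k => x (φ k)) atTop (nhds xstar)) →
      (∀ i, 0 ≤ xstar i) ∧ M xstar = B ∧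
        ∀ y : Fin m → ℝ, (∀ i, 0 ≤ y i) → M y = B →
          ∑ i, |D.mulVec xstar i| ^ q ≤ ∑ i, |D.mulVec y i| ^ q := by
  set M₂ : (Fin m → ℝ) → EuclideanSpace ℝ (Fin p) := fun z => WithLp.toLp 2 (M z)
  set R : (Fin m → ℝ) → ℝ := fun z => ∑ i, |D.mulVec z i| ^ q
  have hmin : ∀ j, IsMinOn (tikhonovFunctional M₂ R (WithLp.toLp 2 (Bj j)) (γ j / q))
      (Set.Ici 0) (x j) := fun j => isMinOn_iff.mpr fun y hy => by
    simpa only [tikhonovFunctional, M₂, EuclideanSpace.dist_toLp_sq] using hxmin j y hy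
  have hc : ∀ j, 0 < γ j / q := fun j => div_pos (hγpos j) hq0
  have hb : ∀ j, dist (WithLp.toLp 2 B : EuclideanSpace ℝ (Fin p)) (WithLp.toLp 2 (Bj j)) ≤ δ j :=
    fun j => by rw [← Real.sqrt_sq dist_nonneg, EuclideanSpace.dist_toLp_sq]; exact hBj j
  have hδc : Tendsto (fun j => δ j ^ 2 / (γ j / q)) atTop (𝓝 0) := by
    have h := hδγ.const_mul q
    rw [mul_zero] at h
    exact h.congr fun j => by rw [div_div_eq_mul_div]; ring
  have hS₂ : (Set.Ici 0 ∩ M₂ ⁻¹' {WithLp.toLp 2 B}).Nonempty :=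
    let ⟨y, hy, hMy⟩ := hS
    ⟨y, hy, congrArg (WithLp.toLp 2) hMy⟩
  have hRcont : Continuous R :=
    (continuous_sum_abs_rpow hq0.le).comp (continuous_const.matrix_mulVec continuous_id)
  refine ⟨exists_tendsto_subseq_of_isMinOn (fun r => Matrix.isBounded_preimage_mulVec hD
    (isBounded_setOf_sum_abs_rpow_le hq0 r)) hmin hc hb hδc hS₂, ?_⟩
  rintro xs ⟨φ, hφ, hconv⟩
  obtain ⟨⟨hxs, hMxs⟩, hRxs⟩ := mem_and_isMinOn_of_tendsto_subseq isClosed_Ici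
    ((PiLp.continuous_toLp 2 _).comp hM) hRcont.lowerSemicontinuous
    (fun z => sum_nonneg fun i _ => Real.rpow_nonneg (abs_nonneg _) q)
    hmin hxpos hc hb hδ (by simpa using hγ.div_const q) hδc hS₂ hφ hconv
  exact ⟨hxs, WithLp.toLp_injective 2 hMxs, fun y hy hMy =>
    isMinOn_iff.mp hRxs y ⟨hy, congrArg (WithLp.toLp 2) hMy⟩⟩

theorem stmt5 (m p : ℕ) (M : (Fin m → ℝ) → (Fin p → ℝ)) (hM : Continuous M)
    (D : Matrix (Fin m) (Fin m) ℝ) (hD : Function.Injective D.mulVec)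
    (q : ℝ) (hq0 : 0 < q) (hq2 : q ≤ 2)
    (B : Fin p → ℝ) (Bj : ℕ → Fin p → ℝ) (δ γ : ℕ → ℝ)
    (hδpos : ∀ j, 0 < δ j) (hγpos : ∀ j, 0 < γ j)
    (hBj : ∀ j, Real.sqrt (∑ i, (B i - Bj j i) ^ 2) ≤ δ j)
    (hδ : Tendsto δ atTop (nhds 0))
    (hγ : Tendsto γ atTop (nhds 0))
    (hδγ : Tendsto (fun j => (δ j) ^ 2 / γ j) atTop (nhds 0))
    (hS : ∃ x : Fin m → ℝ, (∀ i, 0 ≤ x i) ∧ M x = B)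
    (x : ℕ → Fin m → ℝ)
    (hxpos : ∀ j i, 0 ≤ x j i)
    (hxmin : ∀ j, ∀ y : Fin m → ℝ, (∀ i, 0 ≤ y i) →
      (1 / 2) * ∑ i, (M (x j) i - Bj j i) ^ 2 +
          (γ j / q) * ∑ i, |D.mulVec (x j) i| ^ q ≤
        (1 / 2) * ∑ i, (M y i - Bj j i) ^ 2 +
          (γ j / q) * ∑ i, |D.mulVec y i| ^ q) :
    (∃ (φ : ℕ → ℕ) (xstar : Fin m → ℝ), StrictMono φ ∧
        Tendsto (fun k => x (φ k)) atTop (nhds xstar)) ∧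
    ∀ xstar : Fin m → ℝ,
      (∃ φ : ℕ → ℕ, StrictMono φ ∧
        Tendsto (fun k => x (φ k)) atTop (nhds xstar)) →
      (∀ i, 0 ≤ xstar i) ∧ M xstar = B ∧
        ∀ y : Fin m → ℝ, (∀ i, 0 ≤ y i) → M y = B →
          ∑ i, |D.mulVec xstar i| ^ q ≤ ∑ i, |D.mulVec y i| ^ q :=
  stmt5_general m p M hM D hD q hq0 B Bj δ γ hγpos hBj hδ hγ hδγ hS x hxpos hxmin
end

section
/- Under the hypotheses of the regularization theorem, the sequence of minimizers {x_j} is uniformly bounded for all sufficiently large j: there exist j₀ and C̃ such that ‖x_j‖₂ ≤ C̃ for all j > j₀. -/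
/-!
Comparing the Tikhonov functional at the minimizer `x_j` with its value at the exact solution
`x†` gives `‖D x_j‖_q^q ≤ (q/2) δ_j²/γ_j + ‖D x†‖_q^q`, which stays bounded because
`δ_j²/γ_j → 0`. Bounding the `q`-sum bounds every entry of `D x_j`, and an injective matrix
is bounded below, so `x_j` itself stays bounded.
-/

open Finset Filter

theorem Matrix.exists_norm_le_mul_norm_mulVec {𝕜 m n : Type*} [NontriviallyNormedField 𝕜]
    [CompleteSpace 𝕜] [Fintype m] [Fintype n] {D : Matrix m n 𝕜}
    (hD : Function.Injective D.mulVec) : ∃ K : ℝ, 0 ≤ K ∧ ∀ x, ‖x‖ ≤ K * ‖D.mulVec x‖ := by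
  obtain ⟨K, -, hK⟩ := D.mulVecLin.exists_antilipschitzWith (LinearMap.ker_eq_bot.2 hD)
  exact ⟨K, K.2, ZeroHomClass.bound_of_antilipschitz _ hK⟩

theorem norm_le_rpow_inv_of_sum_abs_rpow_le {ι : Type*} [Fintype ι] {w : ι → ℝ} {q R : ℝ}
    (hq : 0 < q) (h : ∑ i, |w i| ^ q ≤ R) : ‖w‖ ≤ R ^ q⁻¹ := by
  have hR : 0 ≤ R := (sum_nonneg fun i _ => by positivity).trans h
  refine (pi_norm_le_iff_of_nonneg (by positivity)).2 fun i => ?_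
  have hi : |w i| ^ q ≤ R :=
    (single_le_sum (fun k _ => by positivity) (mem_univ i)).trans h
  calc ‖w i‖ = (|w i| ^ q) ^ q⁻¹ := by
        rw [Real.norm_eq_abs, ← Real.rpow_mul (abs_nonneg _), mul_inv_cancel₀ hq.ne',
          Real.rpow_one]
    _ ≤ R ^ q⁻¹ := by gcongr

theorem sqrt_sum_sq_le_of_norm_le {ι : Type*} [Fintype ι] {x : ι → ℝ} {c : ℝ} (h : ‖x‖ ≤ c) :
    √(∑ i, x i ^ 2) ≤ √(Fintype.card ι * c ^ 2) := by
  refine Real.sqrt_le_sqrt ?_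
  calc ∑ i, x i ^ 2 ≤ ∑ _i : ι, c ^ 2 := sum_le_sum fun i _ => by
        rw [← sq_abs, ← Real.norm_eq_abs]
        exact pow_le_pow_left₀ (norm_nonneg _) ((norm_le_pi_norm x i).trans h) 2
    _ = Fintype.card ι * c ^ 2 := by rw [sum_const, card_univ, nsmul_eq_mul]

theorem penalty_le_of_tikhonov_le {r P r' P' δ γ q : ℝ} (hr : 0 ≤ r) (hr' : r' ≤ δ ^ 2)
    (hγ : 0 < γ) (hq : 0 < q) (hmin : 1 / 2 * r + γ / q * P ≤ 1 / 2 * r' + γ / q * P') :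
    P ≤ q / 2 * (δ ^ 2 / γ) + P' := by
  have hγq : 0 < γ / q := div_pos hγ hq
  have hP : γ / q * P ≤ γ / q * (q / 2 * (δ ^ 2 / γ) + P') := by
    have : γ / q * (q / 2 * (δ ^ 2 / γ)) = 1 / 2 * δ ^ 2 := by
      field_simp
    rw [mul_add, this]
    linarith
  exact le_of_mul_le_mul_left hP hγq

theorem stmt6_general (m p : ℕ) (M : (Fin m → ℝ) → (Fin p → ℝ))
    (D : Matrix (Fin m) (Fin m) ℝ) (hD : Function.Injective D.mulVec)
    (q : ℝ) (hq0 : 0 < q)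
    (B : Fin p → ℝ) (Bj : ℕ → Fin p → ℝ) (δ γ : ℕ → ℝ)
    (hγpos : ∀ j, 0 < γ j)
    (hBj : ∀ j, Real.sqrt (∑ i, (B i - Bj j i) ^ 2) ≤ δ j)
    (hδγ : Tendsto (fun j => (δ j) ^ 2 / γ j) atTop (nhds 0))
    (hS : ∃ x : Fin m → ℝ, (∀ i, 0 ≤ x i) ∧ M x = B)
    (x : ℕ → Fin m → ℝ)
    (hxmin : ∀ j, ∀ y : Fin m → ℝ, (∀ i, 0 ≤ y i) →
      (1 / 2) * ∑ i, (M (x j) i - Bj j i) ^ 2 +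
          (γ j / q) * ∑ i, |D.mulVec (x j) i| ^ q ≤
        (1 / 2) * ∑ i, (M y i - Bj j i) ^ 2 +
          (γ j / q) * ∑ i, |D.mulVec y i| ^ q) :
    ∃ (j₀ : ℕ) (C : ℝ), ∀ j > j₀, Real.sqrt (∑ i, (x j i) ^ 2) ≤ C := by
  obtain ⟨xs, hxs_nonneg, hxs⟩ := hS
  obtain ⟨K, hK0, hK⟩ := Matrix.exists_norm_le_mul_norm_mulVec hD
  obtain ⟨j₀, hj₀⟩ := eventually_atTop.1 (hδγ.eventually (gt_mem_nhds zero_lt_one))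
  set P := ∑ i, |D.mulVec xs i| ^ q
  refine ⟨j₀, √(m * (K * (q / 2 + P) ^ q⁻¹) ^ 2), fun j hj => ?_⟩
  have hpenalty : ∑ i, |D.mulVec (x j) i| ^ q ≤ q / 2 + P := by
    have hres : ∑ i, (M xs i - Bj j i) ^ 2 ≤ δ j ^ 2 := by
      rw [hxs]; exact (Real.sqrt_le_iff.1 (hBj j)).2
    have hbound := penalty_le_of_tikhonov_le (sum_nonneg fun i _ => sq_nonneg _) hres (hγpos j)
      hq0 (hxmin j xs hxs_nonneg)
    have hsmall : q / 2 * (δ j ^ 2 / γ j) ≤ q / 2 :=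
      mul_le_of_le_one_right (by positivity) (hj₀ j hj.le).le
    linarith
  have hx : ‖x j‖ ≤ K * (q / 2 + P) ^ q⁻¹ :=
    (hK (x j)).trans (by gcongr; exact norm_le_rpow_inv_of_sum_abs_rpow_le hq0 hpenalty)
  simpa using sqrt_sum_sq_le_of_norm_le hx

theorem stmt6 (m p : ℕ) (M : (Fin m → ℝ) → (Fin p → ℝ)) (hM : Continuous M)
    (D : Matrix (Fin m) (Fin m) ℝ) (hD : Function.Injective D.mulVec)
    (q : ℝ) (hq0 : 0 < q) (hq2 : q ≤ 2)
    (B : Fin p → ℝ) (Bj : ℕ → Fin p → ℝ) (δ γ : ℕ → ℝ)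
    (hδpos : ∀ j, 0 < δ j) (hγpos : ∀ j, 0 < γ j)
    (hBj : ∀ j, Real.sqrt (∑ i, (B i - Bj j i) ^ 2) ≤ δ j)
    (hδ : Tendsto δ atTop (nhds 0))
    (hγ : Tendsto γ atTop (nhds 0))
    (hδγ : Tendsto (fun j => (δ j) ^ 2 / γ j) atTop (nhds 0))
    (hS : ∃ x : Fin m → ℝ, (∀ i, 0 ≤ x i) ∧ M x = B)
    (x : ℕ → Fin m → ℝ)
    (hxpos : ∀ j i, 0 ≤ x j i)
    (hxmin : ∀ j, ∀ y : Fin m → ℝ, (∀ i, 0 ≤ y i) →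
      (1 / 2) * ∑ i, (M (x j) i - Bj j i) ^ 2 +
          (γ j / q) * ∑ i, |D.mulVec (x j) i| ^ q ≤
        (1 / 2) * ∑ i, (M y i - Bj j i) ^ 2 +
          (γ j / q) * ∑ i, |D.mulVec y i| ^ q) :
    ∃ (j₀ : ℕ) (C : ℝ), ∀ j > j₀, Real.sqrt (∑ i, (x j i) ^ 2) ≤ C :=
  stmt6_general m p M D hD q hq0 B Bj δ γ hγpos hBj hδγ hS x hxmin
end

section
/- For every s ∈ ℝ, 0 < q < 2 and ε > 0, let u(s) = s(1 − ((s²+ε²)/ε²)^{q/2−1}) and let c(s) be chosen so that ψ(t) := (ε^{q−2}/2)(t − u(s))² + c(s) satisfies ψ(s) = (1/q)(s² + ε²)^{q/2}; then ψ(t) ≥ (1/q)(t² + ε²)^{q/2} for every t ∈ ℝ, with equality and matching derivative at t = s. -/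
/-- Tangent-line inequality for concave rpow: for `0 ≤ p ≤ 1`,
`y ^ p ≤ x ^ p + p * x ^ (p - 1) * (y - x)`. -/
lemma rpow_tangent {x y p : ℝ} (hx : 0 < x) (hy : 0 ≤ y) (hp0 : 0 ≤ p) (hp1 : p ≤ 1) :
    y ^ p ≤ x ^ p + p * x ^ (p - 1) * (y - x) := by
  have hs : -1 ≤ y / x - 1 := by
    have : 0 ≤ y / x := div_nonneg hy hx.le
    linarith
  have hb := rpow_one_add_le_one_add_mul_self hs hp0 hp1
  have h1 : (1 + (y / x - 1)) = y / x := by ring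
  rw [h1, Real.div_rpow hy hx.le] at hb
  have hxp : 0 < x ^ p := Real.rpow_pos_of_pos hx p
  have hb' : y ^ p ≤ (1 + p * (y / x - 1)) * x ^ p := by
    calc y ^ p = y ^ p / x ^ p * x ^ p := by field_simp
    _ ≤ (1 + p * (y / x - 1)) * x ^ p := by
        exact mul_le_mul_of_nonneg_right hb hxp.le
  have hxp1 : x ^ (p - 1) = x ^ p / x := by
    rw [Real.rpow_sub hx, Real.rpow_one]
  calc y ^ p ≤ (1 + p * (y / x - 1)) * x ^ p := hb'
    _ = x ^ p + p * (x ^ p / x) * (y - x) := by field_simp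
    _ = x ^ p + p * x ^ (p - 1) * (y - x) := by rw [hxp1]

theorem stmt12 (q ε s : ℝ) (hq0 : 0 < q) (hq2 : q < 2) (hε : 0 < ε) :
    let f : ℝ → ℝ := fun t => (1 / q) * (t ^ 2 + ε ^ 2) ^ (q / 2)
    let u : ℝ := s * (1 - ((s ^ 2 + ε ^ 2) / ε ^ 2) ^ (q / 2 - 1))
    let c : ℝ := f s - (ε ^ (q - 2) / 2 * s ^ 2 - ε ^ (q - 2) * u * s)
    let g : ℝ → ℝ := fun t => ε ^ (q - 2) / 2 * t ^ 2 - ε ^ (q - 2) * u * t + c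
    (∀ t, f t ≤ g t) ∧ g s = f s ∧ deriv g s = deriv f s := by
  intro f u c g
  have hε2 : (0:ℝ) < ε ^ 2 := by positivity
  set X : ℝ := s ^ 2 + ε ^ 2 with hXdef
  have hX : 0 < X := by positivity
  set A : ℝ := X ^ (q / 2 - 1) with hAdef
  set E : ℝ := ε ^ (q - 2) with hEdef
  -- E = (ε^2) ^ (q/2 - 1)
  have hE2 : E = (ε ^ 2 : ℝ) ^ (q / 2 - 1) := by
    rw [hEdef]
    rw [show (ε ^ 2 : ℝ) = ε ^ (2:ℝ) by
      rw [← Real.rpow_natCast ε 2]; norm_num]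
    rw [← Real.rpow_mul hε.le]
    ring_nf
  have hEpos : 0 < E := by rw [hE2]; exact Real.rpow_pos_of_pos hε2 _
  -- A ≤ E
  have hA : A ≤ E := by
    rw [hE2, hAdef]
    apply Real.rpow_le_rpow_of_nonpos hε2
    · nlinarith [sq_nonneg s]
    · linarith
  -- E * u = E * s - A * s
  have hEu : E * u = E * s - A * s := by
    have hdiv : (X / ε ^ 2) ^ (q / 2 - 1) = A / E := by
      rw [Real.div_rpow hX.le hε2.le, hAdef, hE2]
    show E * (s * (1 - (X / ε ^ 2) ^ (q / 2 - 1))) = E * s - A * s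
    rw [hdiv]
    field_simp
  have hq' : (0:ℝ) < 1 / q := by positivity
  -- main inequality
  have hmain : ∀ t, f t ≤ g t := by
    intro t
    set Y : ℝ := t ^ 2 + ε ^ 2 with hYdef
    have hY : (0:ℝ) ≤ Y := by positivity
    have htan := rpow_tangent hX hY (by linarith : (0:ℝ) ≤ q / 2)
      (by linarith : q / 2 ≤ 1)
    rw [← hAdef] at htan
    have h1 : f t ≤ f s + 1 / 2 * A * (t ^ 2 - s ^ 2) := by
      have h2 : f t ≤ (1 / q) * (X ^ (q / 2) + q / 2 * A * (Y - X)) := by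
        show (1 / q) * Y ^ (q / 2) ≤ _
        exact mul_le_mul_of_nonneg_left htan hq'.le
      have h3 : (1 / q) * (X ^ (q / 2) + q / 2 * A * (Y - X))
          = f s + 1 / 2 * A * (t ^ 2 - s ^ 2) := by
        show _ = (1 / q) * X ^ (q / 2) + 1 / 2 * A * (t ^ 2 - s ^ 2)
        have : Y - X = t ^ 2 - s ^ 2 := by rw [hYdef, hXdef]; ring
        rw [this]
        field_simp
      linarith [h2, h3.le]
    have hg : g t = f s + E / 2 * (t ^ 2 - s ^ 2) - E * u * (t - s) := by
      show E / 2 * t ^ 2 - E * u * t + (f s - (E / 2 * s ^ 2 - E * u * s)) = _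
      ring
    rw [hg, hEu]
    nlinarith [mul_nonneg (sub_nonneg.mpr hA) (sq_nonneg (t - s))]
  refine ⟨hmain, ?_, ?_⟩
  · show E / 2 * s ^ 2 - E * u * s + (f s - (E / 2 * s ^ 2 - E * u * s)) = f s
    ring
  · -- derivatives
    have hf' : HasDerivAt f (s * A) s := by
      have h0 : HasDerivAt (fun t : ℝ => t ^ 2 + ε ^ 2) (2 * s) s := by
        simpa using (hasDerivAt_pow 2 s).add_const (ε ^ 2)
      have h1 : HasDerivAt (fun t : ℝ => (t ^ 2 + ε ^ 2) ^ (q / 2))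
          ((q / 2 * X ^ (q / 2 - 1)) * (2 * s)) s :=
        by have := (Real.hasDerivAt_rpow_const (p := q / 2) (Or.inl hX.ne')).comp s h0; exact this
      have h2 := h1.const_mul (1 / q)
      refine h2.congr_deriv ?_
      rw [← hAdef]
      field_simp
    have hg' : HasDerivAt g (s * A) s := by
      have h1 : HasDerivAt (fun t : ℝ => E / 2 * t ^ 2 - E * u * t + c)
          (E / 2 * (2 * s) - E * u) s := by
        have ha : HasDerivAt (fun t : ℝ => t ^ 2) (2 * s) s := by
          simpa using hasDerivAt_pow 2 s
        have hb : HasDerivAt (fun t : ℝ => t) 1 s := hasDerivAt_id s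
        simpa using ((ha.const_mul (E / 2)).sub (hb.const_mul (E * u))).add_const c
      have heq : E / 2 * (2 * s) - E * u = s * A := by rw [hEu]; ring
      rw [← heq]
      exact h1
    rw [hf'.deriv, hg'.deriv]
end
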